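/- arXiv:2203.11175 — 9 statements merged into one kernel-verified Lean document; each statement's English description precedes it below -/
import Mathlib

section
/- The composite finite-powerset functor P∘P is not zippable: there exist sets A and B such that the map ⟨PP(A + !), PP(! + B)⟩ : PP(A+B) → PP(A+1) × PP(1+B) is not injective. Concretely, for A with distinct elements a₁, a₂ and B with distinct elements b₁, b₂, the sets {{a₁,b₁},{a₂,b₂}} and {{a₁,b₂},{a₂,b₁}} (with suitable injections into A+B) have the same image under this map. -/
/-!
Collapsing `B` to a point sends both families to `{{a₁, ∗}, {a₂, ∗}}`, and collapsing `A` sends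
both to `{{∗, b₁}, {∗, b₂}}`: the two projections forget which `aᵢ` is paired with which `bⱼ`.
-/

/-- The powerset functor on maps: direct image. -/
def Pmap {X Y : Type*} (f : X → Y) : Set X → Set Y := Set.image f

theorem Set.pair_pair_ne_crossed {X : Type*} {x₁ x₂ y₁ y₂ : X}
    (hx : x₁ ≠ x₂) (hy : y₁ ≠ y₂) (hxy : x₁ ≠ y₁) :
    ({{x₁, y₁}, {x₂, y₂}} : Set (Set X)) ≠ {{x₁, y₂}, {x₂, y₁}} := by
  intro h
  have hmem : ({x₁, y₁} : Set X) ∈ ({{x₁, y₂}, {x₂, y₁}} : Set (Set X)) :=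
    h ▸ Set.mem_insert _ _
  simp only [Set.mem_insert_iff, Set.mem_singleton_iff, Set.pair_eq_pair_iff] at hmem
  tauto

theorem pmap_pmap_crossed_of_eq_left {X Y : Type*} (f : X → Y) {x₁ x₂ y₁ y₂ : X}
    (h : f x₁ = f x₂) :
    Pmap (Pmap f) {{x₁, y₁}, {x₂, y₂}} = Pmap (Pmap f) {{x₁, y₂}, {x₂, y₁}} := by
  simp only [Pmap, Set.image_pair, h]
  exact Set.pair_comm _ _

theorem pmap_pmap_crossed_of_eq_right {X Y : Type*} (f : X → Y) {x₁ x₂ y₁ y₂ : X}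
    (h : f y₁ = f y₂) :
    Pmap (Pmap f) {{x₁, y₁}, {x₂, y₂}} = Pmap (Pmap f) {{x₁, y₂}, {x₂, y₁}} := by
  simp only [Pmap, Set.image_pair, h]

theorem stmt4 (A B : Type*) (a₁ a₂ : A) (b₁ b₂ : B) (ha : a₁ ≠ a₂) (hb : b₁ ≠ b₂) :
    (({{Sum.inl a₁, Sum.inr b₁}, {Sum.inl a₂, Sum.inr b₂}} : Set (Set (A ⊕ B))) ≠
      {{Sum.inl a₁, Sum.inr b₂}, {Sum.inl a₂, Sum.inr b₁}}) ∧
    (Pmap (Pmap (Sum.map id fun _ => PUnit.unit))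
        ({{Sum.inl a₁, Sum.inr b₁}, {Sum.inl a₂, Sum.inr b₂}} : Set (Set (A ⊕ B))) =
      Pmap (Pmap (Sum.map id fun _ => PUnit.unit))
        {{Sum.inl a₁, Sum.inr b₂}, {Sum.inl a₂, Sum.inr b₁}}) ∧
    (Pmap (Pmap (Sum.map (fun _ => PUnit.unit) id))
        ({{Sum.inl a₁, Sum.inr b₁}, {Sum.inl a₂, Sum.inr b₂}} : Set (Set (A ⊕ B))) =
      Pmap (Pmap (Sum.map (fun _ => PUnit.unit) id))
        {{Sum.inl a₁, Sum.inr b₂}, {Sum.inl a₂, Sum.inr b₁}}) ∧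
    ¬ Function.Injective (fun S : Set (Set (A ⊕ B)) =>
        (Pmap (Pmap (Sum.map id fun _ => PUnit.unit)) S,
         Pmap (Pmap (Sum.map (fun _ => PUnit.unit) id)) S)) := by
  have hne := Set.pair_pair_ne_crossed (Sum.inl_injective.ne ha) (Sum.inr_injective.ne hb)
    Sum.inl_ne_inr
  refine ⟨hne, pmap_pmap_crossed_of_eq_right _ rfl, pmap_pmap_crossed_of_eq_left _ rfl,
    fun hinj => hne (hinj (Prod.ext ?_ ?_))⟩
  exacts [pmap_pmap_crossed_of_eq_right _ rfl, pmap_pmap_crossed_of_eq_left _ rfl]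
end

section
/- For a commutative monoid M, the monoid-valued functor M^(−) is cancellative if and only if M is a cancellative monoid, i.e., c + a = c + b implies a = b for all a, b, c ∈ M. -/
/-- Characteristic function of {1,2} ⊆ 3. -/
def chi12 : Fin 3 → Fin 2 := fun t => if t = 0 then 0 else 1

/-- Characteristic function of {2} ⊆ 3. -/
def chi2 : Fin 3 → Fin 2 := fun t => if t = 2 then 1 else 0

/-!
The pair `(M^χ_{1,2}, M^χ_{2})` sends `μ` to `((μ 0, μ 1 + μ 2), (μ 0 + μ 1, μ 2))`. It thus
recovers `μ 0` and `μ 2`, and `μ 1` from `μ 0 + μ 1` exactly when `μ 0` can be cancelled.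
Conversely, `(c, a, c)` and `(c, b, c)` have the same image as soon as `c + a = c + b`.
-/

namespace Finsupp

theorem mapDomain_apply_eq_sum_filter {α β M : Type*} [Fintype α] [DecidableEq β]
    [AddCommMonoid M] (f : α → β) (μ : α →₀ M) (b : β) :
    mapDomain f μ b = ∑ a with f a = b, μ a := by
  rw [mapDomain, sum_fintype _ _ (by simp), Finset.sum_apply']
  simp [single_apply, Finset.sum_ite]

end Finsupp

open Finsupp

lemma mapDomain_chi12_chi2_eq_iff {M : Type*} [AddCommMonoid M] (μ ν : Fin 3 →₀ M) :
    (mapDomain chi12 μ, mapDomain chi2 μ) = (mapDomain chi12 ν, mapDomain chi2 ν) ↔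
      μ 0 = ν 0 ∧ μ 1 + μ 2 = ν 1 + ν 2 ∧ μ 0 + μ 1 = ν 0 + ν 1 ∧ μ 2 = ν 2 := by
  simp only [Prod.ext_iff, Finsupp.ext_iff, Fin.forall_fin_two, mapDomain_apply_eq_sum_filter]
  simp [chi12, chi2, Finset.sum_filter, Fin.sum_univ_three, and_assoc]

theorem stmt5 (M : Type*) [AddCommMonoid M] :
    Function.Injective (fun μ : Fin 3 →₀ M =>
      (Finsupp.mapDomain chi12 μ, Finsupp.mapDomain chi2 μ)) ↔
    ∀ a b c : M, c + a = c + b → a = b := by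
  constructor
  · intro hinj a b c h
    have hcac : (equivFunOnFinite.symm ![c, a, c] : Fin 3 →₀ M) = equivFunOnFinite.symm ![c, b, c] :=
      hinj <| (mapDomain_chi12_chi2_eq_iff _ _).2
        ⟨rfl, by simpa [add_comm] using h, by simpa using h, rfl⟩
    simpa using DFunLike.congr_fun hcac 1
  · intro hcancel μ ν h
    obtain ⟨h0, -, h01, h2⟩ := (mapDomain_chi12_chi2_eq_iff μ ν).1 h
    ext i
    fin_cases i
    · exact h0
    · exact hcancel _ _ (μ 0) (h0 ▸ h01)
    · exact h2
end

section
/- If α : F ⇒ G is a natural transformation with injective components and G is a cancellative Set-functor, then F is cancellative. In particular, cancellative functors are closed under subfunctors. -/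
open CategoryTheory

/-- A Set-functor is cancellative if ⟨F χ_{1,2}, F χ_{2}⟩ : F3 → F2 × F2 is injective. -/
def Cancellative (F : Type ⥤ Type) : Prop :=
  Function.Injective fun t : F.obj (Fin 3) => (F.map (TypeCat.ofHom chi12) t, F.map (TypeCat.ofHom chi2) t)

theorem injective_pair_map_of_natTrans {F G : Type ⥤ Type} (α : F ⟶ G)
    {X Y Z : Type} (f : X ⟶ Y) (g : X ⟶ Z) (hαX : Function.Injective (α.app X))
    (hG : Function.Injective fun t : G.obj X => (G.map f t, G.map g t)) :
    Function.Injective fun t : F.obj X => (F.map f t, F.map g t) := by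
  intro x y hxy
  obtain ⟨hf, hg⟩ := Prod.mk.inj hxy
  apply hαX
  apply hG
  simp only [← NatTrans.naturality_apply, hf, hg]

theorem stmt7 (F G : Type ⥤ Type) (α : F ⟶ G)
    (hα : ∀ X : Type, Function.Injective (α.app X))
    (hG : Cancellative G) : Cancellative F :=
  injective_pair_map_of_natTrans α _ _ (hα (Fin 3)) hG
end

section
/- The Set-functor F X = {S ⊆ X : |S| = 0 or |S| = 4} (with F f sending S to f[S] if |f[S]| = 4 and to ∅ otherwise) is cancellative but not zippable. -/
/-- The object part of the functor F X = {S ⊆ X : |S| = 0 or |S| = 4}. -/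
def F0 (X : Type) : Type := {S : Set X // S = ∅ ∨ S.ncard = 4}

/-- The action of F on maps: S ↦ f[S] if |f[S]| = 4, and ∅ otherwise. -/
noncomputable def F0map {X Y : Type} (f : X → Y) (S : F0 X) : F0 Y :=
  if h : (f '' S.val).ncard = 4 then ⟨f '' S.val, Or.inr h⟩ else ⟨∅, Or.inl rfl⟩

/-! On a set with fewer than four elements `F` is a singleton, so both maps in the definition of
cancellativity have singleton domain, while for zippability the codomain `F 3 × F 3` (taking
`A = B = 2`) is a singleton but `F (2 + 2)` contains both `∅` and the whole set. -/

lemma F0.val_eq_empty_of_card_lt_four {X : Type} [Finite X] (hX : Nat.card X < 4) (t : F0 X) :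
    t.val = ∅ :=
  t.2.resolve_right fun h => by linarith [h ▸ Set.ncard_le_card t.val]

lemma F0.subsingleton_of_card_lt_four {X : Type} [Finite X] (hX : Nat.card X < 4) :
    Subsingleton (F0 X) :=
  ⟨fun s t => Subtype.ext <|
    (s.val_eq_empty_of_card_lt_four hX).trans (t.val_eq_empty_of_card_lt_four hX).symm⟩

lemma F0.nontrivial_of_four_le_card {X : Type} (hX : 4 ≤ Nat.card X) : Nontrivial (F0 X) := by
  obtain ⟨S, -, hS⟩ := Set.exists_subset_card_eq (s := (Set.univ : Set X)) (n := 4)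
    (by rwa [Set.ncard_univ])
  refine ⟨⟨⟨S, Or.inr hS⟩, ⟨∅, Or.inl rfl⟩, fun h => ?_⟩⟩
  simp [show S = ∅ from congrArg Subtype.val h] at hS

theorem stmt12 :
    Function.Injective (fun t : F0 (Fin 3) => (F0map chi12 t, F0map chi2 t)) ∧
    ¬ ∀ (A B : Type), Function.Injective (fun t : F0 (A ⊕ B) =>
        (F0map (Sum.map id fun _ => PUnit.unit) t,
         F0map (Sum.map (fun _ => PUnit.unit) id) t)) := by
  constructor
  · have := F0.subsingleton_of_card_lt_four (X := Fin 3) (by simp)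
    exact Function.injective_of_subsingleton _
  · intro hzip
    have := F0.subsingleton_of_card_lt_four (X := Fin 2 ⊕ PUnit) (by simp)
    have := F0.subsingleton_of_card_lt_four (X := PUnit ⊕ Fin 2) (by simp)
    have := F0.nontrivial_of_four_le_card (X := Fin 2 ⊕ Fin 2) (by simp)
    obtain ⟨s, t, hst⟩ := exists_pair_ne (F0 (Fin 2 ⊕ Fin 2))
    exact hst (hzip (Fin 2) (Fin 2) (Subsingleton.elim _ _))
end

section
/- Every Set-functor satisfying |F(2+2)| > 1 and |F3| = 1 is cancellative but not zippable. -/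
open CategoryTheory

/-- A Set-functor is zippable if ⟨F(A + !), F(! + B)⟩ : F(A+B) → F(A+1) × F(1+B)
is injective for all sets A, B. -/
def Zippable (F : Type ⥤ Type) : Prop :=
  ∀ A B : Type, Function.Injective fun t : F.obj (A ⊕ B) =>
    (F.map (TypeCat.ofHom (Sum.map id fun _ => PUnit.unit)) t,
      F.map (TypeCat.ofHom (Sum.map (fun _ => PUnit.unit) id)) t)

/-!
Since `F3` has at most one element, the map `F3 → F2 × F2` is trivially injective. Functors preserve
isomorphisms, so `F(2+1)` and `F(1+2)`, being images of three-element sets, have at most one element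
as well; the zipping map `F(2+2) → F(2+1) × F(1+2)` therefore identifies the two distinct elements
of `F(2+2)`.
-/

theorem CategoryTheory.Functor.subsingleton_obj_of_equiv (F : Type ⥤ Type) {α β : Type}
    (e : α ≃ β) [Subsingleton (F.obj β)] : Subsingleton (F.obj α) :=
  (F.mapIso e.toIso).toEquiv.subsingleton

theorem cancellative_of_subsingleton (F : Type ⥤ Type) [Subsingleton (F.obj (Fin 3))] :
    Cancellative F :=
  Function.injective_of_subsingleton _

theorem not_zippable_of_subsingleton_sum_punit (F : Type ⥤ Type) {A B : Type}
    [Subsingleton (F.obj (A ⊕ PUnit))] [Subsingleton (F.obj (PUnit ⊕ B))]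
    {x y : F.obj (A ⊕ B)} (hxy : x ≠ y) : ¬ Zippable F :=
  fun hz => hxy <| hz A B <| Prod.ext (Subsingleton.elim _ _) (Subsingleton.elim _ _)

theorem stmt13_general (F : Type ⥤ Type)
    (h1 : ∃ x y : F.obj (Fin 2 ⊕ Fin 2), x ≠ y)
    (h3 : Subsingleton (F.obj (Fin 3))) :
    Cancellative F ∧ ¬ Zippable F := by
  obtain ⟨x, y, hxy⟩ := h1
  have : Subsingleton (F.obj (Fin 2 ⊕ PUnit)) :=
    F.subsingleton_obj_of_equiv (Fintype.equivFinOfCardEq (n := 3) rfl)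
  have : Subsingleton (F.obj (PUnit ⊕ Fin 2)) :=
    F.subsingleton_obj_of_equiv (Fintype.equivFinOfCardEq (n := 3) rfl)
  exact ⟨cancellative_of_subsingleton F, not_zippable_of_subsingleton_sum_punit F hxy⟩

theorem stmt13 (F : Type ⥤ Type)
    (h1 : ∃ x y : F.obj (Fin 2 ⊕ Fin 2), x ≠ y)
    (h2 : Nonempty (F.obj (Fin 3))) (h3 : Subsingleton (F.obj (Fin 3))) :
    Cancellative F ∧ ¬ Zippable F :=
  stmt13_general F h1 h3
end

section
/- If a Set-functor F is zippable and cancellative, then for all sets A and B, the map ⟨F(A + !), F(! + B)⟩ : F(A + 1 + B) → F(A + 1) × F(1 + B), collapsing the B-summand resp. the A-summand, is injective. -/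
open CategoryTheory

/-!
Collapsing `B` to a point sends `t ∈ F(A + 1 + B)` to `s ∈ F(1 + 1 + B)`, and zippability at
`A` and `1 + B` shows that `t` is determined by `F(A + !) t` together with `s`. So it suffices to
treat the case `A = 1`. There, zippability at `1 + 1` and `B` determines `s` by its image in
`F((1 + 1) + 1) ≅ F3` together with `F(! + B) s`, and by cancellativity the element of `F3` is
determined by its images under `χ_{1,2}` and `χ_{2}`, which factor through `F(1 + !) s` and
`F(! + B) s` respectively.
-/

namespace CategoryTheory.Functor

variable (F : Type ⥤ Type)

lemma map_ofHom_map_ofHom {X Y Z : Type} (f : X → Y) (g : Y → Z) (t : F.obj X) :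
    F.map (↾g) (F.map (↾f) t) = F.map (↾(g ∘ f)) t :=
  (F.map_comp_apply (↾f) (↾g) t).symm

lemma map_ofHom_eq_of_eq_comp {X Y Z : Type} {f : X → Y} {g : X → Z} (k : Y → Z)
    (hg : g = k ∘ f) {t₁ t₂ : F.obj X} (h : F.map (↾f) t₁ = F.map (↾f) t₂) :
    F.map (↾g) t₁ = F.map (↾g) t₂ := by
  rw [hg, ← map_ofHom_map_ofHom, h, map_ofHom_map_ofHom]

lemma map_ofHom_injective_of_leftInverse {X Y : Type} {f : X → Y} {g : Y → X}
    (hgf : Function.LeftInverse g f) : Function.Injective (F.map (↾f)) := by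
  refine Function.LeftInverse.injective (g := F.map (↾g)) fun t => ?_
  rw [map_ofHom_map_ofHom, hgf.comp_eq_id]
  exact F.map_id_apply _ t

end CategoryTheory.Functor

open CategoryTheory.Functor

variable {F : Type ⥤ Type}

lemma Zippable.eq_of_map_eq (hz : Zippable F) {A B : Type} {t₁ t₂ : F.obj (A ⊕ B)}
    (hA : F.map (↾(Sum.map id fun _ => PUnit.unit)) t₁ =
      F.map (↾(Sum.map id fun _ => PUnit.unit)) t₂)
    (hB : F.map (↾(Sum.map (fun _ => PUnit.unit) id)) t₁ =
      F.map (↾(Sum.map (fun _ => PUnit.unit) id)) t₂) :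
    t₁ = t₂ :=
  hz A B (Prod.ext hA hB)

lemma Cancellative.eq_of_map_eq (hc : Cancellative F) {t₁ t₂ : F.obj (Fin 3)}
    (h₁₂ : F.map (↾chi12) t₁ = F.map (↾chi12) t₂) (h₂ : F.map (↾chi2) t₁ = F.map (↾chi2) t₂) :
    t₁ = t₂ :=
  hc (Prod.ext h₁₂ h₂)

lemma eq_of_map_eq_of_zippable_of_cancellative (hz : Zippable F) (hc : Cancellative F)
    {B : Type} {t₁ t₂ : F.obj (PUnit ⊕ (PUnit ⊕ B))}
    (hA : F.map (↾(Sum.map id fun _ => PUnit.unit)) t₁ =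
      F.map (↾(Sum.map id fun _ => PUnit.unit)) t₂)
    (hB : F.map (↾(Sum.elim (fun _ => Sum.inl PUnit.unit) id)) t₁ =
      F.map (↾(Sum.elim (fun _ => Sum.inl PUnit.unit) id)) t₂) :
    t₁ = t₂ := by
  let κ : (Unit ⊕ Unit) ⊕ Unit → Fin 3 := Sum.elim (Sum.elim (fun _ => 0) fun _ => 1) fun _ => 2
  have hκ : Function.LeftInverse ![.inl (.inl .unit), .inl (.inr .unit), .inr .unit] κ := by
    rintro ((⟨⟩ | ⟨⟩) | ⟨⟩) <;> rfl
  apply F.map_ofHom_injective_of_leftInverse (Equiv.sumAssoc Unit Unit B).symm.left_inv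
  apply hz.eq_of_map_eq
  · apply F.map_ofHom_injective_of_leftInverse hκ
    apply hc.eq_of_map_eq <;> simp only [map_ofHom_map_ofHom]
    · exact F.map_ofHom_eq_of_eq_comp (Sum.elim (fun _ => 0) fun _ => 1)
        (by funext x; rcases x with _ | _ | _ <;> rfl) hA
    · exact F.map_ofHom_eq_of_eq_comp (Sum.elim (fun _ => 0) fun _ => 1)
        (by funext x; rcases x with _ | _ | _ <;> rfl) hB
  · simp only [map_ofHom_map_ofHom]
    exact F.map_ofHom_eq_of_eq_comp id (by funext x; rcases x with _ | _ | _ <;> rfl) hB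

theorem stmt15 (F : Type ⥤ Type) (hz : Zippable F) (hc : Cancellative F)
    (A B : Type) :
    Function.Injective (fun t : F.obj (A ⊕ (PUnit ⊕ B)) =>
      (F.map (TypeCat.ofHom (Sum.map id fun _ => PUnit.unit)) t,
       F.map (TypeCat.ofHom (Sum.elim (fun _ => Sum.inl PUnit.unit) id)) t)) := by
  intro t₁ t₂ h
  obtain ⟨hA, hB⟩ := Prod.ext_iff.mp h
  refine hz.eq_of_map_eq hA (eq_of_map_eq_of_zippable_of_cancellative hz hc ?_ ?_) <;>
    simp only [map_ofHom_map_ofHom]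
  · exact F.map_ofHom_eq_of_eq_comp (Sum.map (fun _ => PUnit.unit) id)
      (by funext x; rcases x with _ | _ | _ <;> rfl) hA
  · exact F.map_ofHom_eq_of_eq_comp id (by funext x; rcases x with _ | _ | _ <;> rfl) hB
end

section
/- In the transition system with layers L_i = {x_i, y_i, z_i}, where c(x₀) = {y₀}, c(y₀) = ∅, c(z₀) = {x₀}, and c(x_{i+1}) = {x_i, y_i, z_i}, c(y_{i+1}) = {y_i, z_i}, c(z_{i+1}) = {x_i, z_i}, all states are pairwise non-bisimilar. -/
/-- The states of the transition system: layers {x_i, y_i, z_i} for i ∈ ℕ. -/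
inductive St : Type
  | x : ℕ → St
  | y : ℕ → St
  | z : ℕ → St

open St

/-- The transition structure. -/
def c : St → Set St
  | x 0 => {y 0}
  | y 0 => ∅
  | z 0 => {x 0}
  | x (n + 1) => {x n, y n, z n}
  | y (n + 1) => {y n, z n}
  | z (n + 1) => {x n, z n}

/-- A bisimulation on the transition system (St, c). -/
def IsBisimulation (R : St → St → Prop) : Prop :=
  ∀ a b, R a b →
    (∀ a' ∈ c a, ∃ b' ∈ c b, R a' b') ∧ (∀ b' ∈ c b, ∃ a' ∈ c a, R a' b')

/-- Two states are bisimilar if some bisimulation relates them. -/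
def Bisimilar (s t : St) : Prop := ∃ R, IsBisimulation R ∧ R s t

/-- Depth measure. -/
def d : St → ℕ
  | x 0 => 1
  | y 0 => 0
  | z 0 => 2
  | x (n + 1) => n + 3
  | y (n + 1) => n + 3
  | z (n + 1) => n + 3

lemma d_lt (n : ℕ) : d (x n) < n + 3 ∧ d (y n) < n + 3 ∧ d (z n) < n + 3 := by
  rcases n with _ | n <;> simp [d]

lemma d_succ_lt : ∀ s : St, ∀ s' ∈ c s, d s' < d s := by
  intro s s' hs'
  rcases s with (n|n|n) <;> rcases n with _ | n <;>
    simp only [c, Set.mem_singleton_iff, Set.mem_insert_iff,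
      Set.mem_empty_iff_false] at hs'
  · subst hs'; simp [d]
  · rcases hs' with h | h | h <;> subst h <;> simp only [d] <;>
      first | exact (d_lt n).1 | exact (d_lt n).2.1 | exact (d_lt n).2.2
  · rcases hs' with h | h <;> subst h <;> simp only [d] <;>
      first | exact (d_lt n).2.1 | exact (d_lt n).2.2
  · subst hs'; simp [d]
  · rcases hs' with h | h <;> subst h <;> simp only [d] <;>
      first | exact (d_lt n).1 | exact (d_lt n).2.2

lemma c_inj : ∀ s t : St, c s = c t → s = t := by
  intro s t h
  rw [Set.ext_iff] at h
  rcases s with (n|n|n) <;> rcases t with (m|m|m) <;>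
    rcases n with _ | n <;> rcases m with _ | m <;>
    simp only [c, Set.mem_singleton_iff, Set.mem_insert_iff,
      Set.mem_empty_iff_false] at h <;>
    first
      | rfl
      | (have h1 := h (x n); have h2 := h (y n); have h3 := h (z n)
         have h4 := h (x m); have h5 := h (y m); have h6 := h (z m)
         clear h; simp at h1 h2 h3 h4 h5 h6 ⊢ <;> omega)
      | (have h1 := h (x n); have h2 := h (y n); have h3 := h (z n)
         have h4 := h (x 0); have h5 := h (y 0); have h6 := h (z 0)
         clear h; simp at h1 h2 h3 h4 h5 h6 ⊢ <;> omega)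
      | (have h1 := h (x m); have h2 := h (y m); have h3 := h (z m)
         have h4 := h (x 0); have h5 := h (y 0); have h6 := h (z 0)
         clear h; simp at h1 h2 h3 h4 h5 h6 ⊢ <;> omega)
      | (have h1 := h (x 0); have h2 := h (y 0); have h3 := h (z 0)
         clear h; simp at h1 h2 h3 ⊢ <;> omega)

theorem stmt16 : ∀ s t : St, Bisimilar s t → s = t := by
  have key : ∀ N s t, d s + d t ≤ N → Bisimilar s t → s = t := by
    intro N
    induction N with
    | zero =>
      intro s t hN _
      rcases s with (n|n|n) <;> rcases t with (m|m|m) <;>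
        rcases n with _ | n <;> rcases m with _ | m <;> simp_all [d]
    | succ N ih =>
      intro s t hN hb
      have hcs : c s = c t := by
        ext a
        constructor
        · intro ha
          obtain ⟨R, hR, hst⟩ := hb
          obtain ⟨b', hb', hRb⟩ := (hR s t hst).1 a ha
          have h1 := d_succ_lt s a ha
          have h2 := d_succ_lt t b' hb'
          have : a = b' := ih a b' (by omega) ⟨R, hR, hRb⟩
          rwa [this]
        · intro ha
          obtain ⟨R, hR, hst⟩ := hb
          obtain ⟨a', ha', hRa⟩ := (hR s t hst).2 a ha
          have h1 := d_succ_lt s a' ha'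
          have h2 := d_succ_lt t a ha
          have : a' = a := ih a' a (by omega) ⟨R, hR, hRa⟩
          rwa [this] at ha'
      exact c_inj s t hcs
  intro s t hb
  exact key _ s t le_rfl hb
end

section
/- In the transition system with states x_i, y_i, z_i (i ∈ ℕ) where c(x₀)={y₀}, c(y₀)=∅, c(z₀)={x₀}, c(x_{i+1})={x_i,y_i,z_i}, c(y_{i+1})={y_i,z_i}, c(z_{i+1})={x_i,z_i}, every modal formula φ (built from ⊤, negation, conjunction, and the diamond modality ◇) with semantics satisfying ⟦φ⟧ ∩ {x_{n}, y_{n}, z_{n}} = {x_{n}} has size at least fib(n), the n-th Fibonacci number. -/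
open St

/-- Modal formulae: ⊤, negation, conjunction, diamond. -/
inductive Formula : Type
  | top : Formula
  | neg : Formula → Formula
  | and : Formula → Formula → Formula
  | dia : Formula → Formula

/-- The size of a formula: number of constructors. -/
def Formula.size : Formula → ℕ
  | .top => 1
  | .neg φ => φ.size + 1
  | .and φ ψ => φ.size + ψ.size + 1
  | .dia φ => φ.size + 1

/-- Semantics of modal formulae over the transition system (St, c). -/
def sem : Formula → Set St
  | .top => Set.univ
  | .neg φ => (sem φ)ᶜ
  | .and φ ψ => sem φ ∩ sem ψ
  | .dia φ => {s | ∃ t ∈ c s, t ∈ sem φ}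

lemma fib_tri (n : ℕ) : Nat.fib n ≤ Nat.fib (n-1) + Nat.fib (n-2) + 1 := by
  match n with
  | 0 => simp
  | 1 => simp
  | (k+2) =>
    show Nat.fib (k+2) ≤ Nat.fib (k+1) + Nat.fib k + 1
    rw [Nat.fib_add_two]; omega

lemma fib_pred_le (n : ℕ) : Nat.fib (n-1) ≤ Nat.fib n := Nat.fib_mono (Nat.sub_le n 1)

lemma fib_pred2_le (n : ℕ) : Nat.fib (n-2) ≤ Nat.fib n := Nat.fib_mono (by omega)

lemma dia_x (m : ℕ) (φ : Formula) :
    x (m+1) ∈ sem (.dia φ) ↔ (x m ∈ sem φ ∨ y m ∈ sem φ ∨ z m ∈ sem φ) := by simp [sem, c]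

lemma dia_y (m : ℕ) (φ : Formula) :
    y (m+1) ∈ sem (.dia φ) ↔ (y m ∈ sem φ ∨ z m ∈ sem φ) := by simp [sem, c]

lemma dia_z (m : ℕ) (φ : Formula) :
    z (m+1) ∈ sem (.dia φ) ↔ (x m ∈ sem φ ∨ z m ∈ sem φ) := by simp [sem, c]

/-- The simultaneous induction invariant: separating `x n` costs `fib n`,
separating `y n` costs `fib (n-1)`, separating `z n` costs `fib (n-2)`. -/
def Good (φ : Formula) : Prop := ∀ n : ℕ,
    (((x n ∈ sem φ ∧ y n ∉ sem φ ∧ z n ∉ sem φ) ∨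
      (x n ∉ sem φ ∧ y n ∈ sem φ ∧ z n ∈ sem φ)) → Nat.fib n ≤ φ.size) ∧
    (((x n ∉ sem φ ∧ y n ∈ sem φ ∧ z n ∉ sem φ) ∨
      (x n ∈ sem φ ∧ y n ∉ sem φ ∧ z n ∈ sem φ)) → Nat.fib (n-1) ≤ φ.size) ∧
    (((x n ∉ sem φ ∧ y n ∉ sem φ ∧ z n ∈ sem φ) ∨
      (x n ∈ sem φ ∧ y n ∈ sem φ ∧ z n ∉ sem φ)) → Nat.fib (n-2) ≤ φ.size)

lemma good_xy {p : Formula} {n : ℕ} (hp : Good p)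
    (h1 : x n ∈ sem p) (h2 : y n ∉ sem p) : Nat.fib (n-1) ≤ p.size := by
  by_cases hz : z n ∈ sem p
  · exact (hp n).2.1 (Or.inr ⟨h1, h2, hz⟩)
  · exact le_trans (fib_pred_le n) ((hp n).1 (Or.inl ⟨h1, h2, hz⟩))

lemma good_xz {p : Formula} {n : ℕ} (hp : Good p)
    (h1 : x n ∈ sem p) (h3 : z n ∉ sem p) : Nat.fib (n-2) ≤ p.size := by
  by_cases hy : y n ∈ sem p
  · exact (hp n).2.2 (Or.inr ⟨h1, hy, h3⟩)
  · exact le_trans (fib_pred2_le n) ((hp n).1 (Or.inl ⟨h1, hy, h3⟩))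

lemma good_y {p : Formula} {n : ℕ} (hp : Good p)
    (h1 : x n ∉ sem p) (h2 : y n ∈ sem p) : Nat.fib (n-1) ≤ p.size := by
  by_cases hz : z n ∈ sem p
  · exact le_trans (fib_pred_le n) ((hp n).1 (Or.inr ⟨h1, h2, hz⟩))
  · exact (hp n).2.1 (Or.inl ⟨h1, h2, hz⟩)

lemma good_z {p : Formula} {n : ℕ} (hp : Good p)
    (h1 : x n ∉ sem p) (h3 : z n ∈ sem p) : Nat.fib (n-2) ≤ p.size := by
  by_cases hy : y n ∈ sem p
  · exact le_trans (fib_pred2_le n) ((hp n).1 (Or.inr ⟨h1, hy, h3⟩))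
  · exact (hp n).2.2 (Or.inl ⟨h1, hy, h3⟩)

lemma key (φ : Formula) : Good φ := by
  induction φ with
  | top =>
    intro n
    refine ⟨?_, ?_, ?_⟩ <;> rintro (⟨h1, h2, h3⟩ | ⟨h1, h2, h3⟩) <;> simp [sem] at h1 h2 h3
  | neg ψ ih =>
    intro n
    have hmem : ∀ s : St, s ∈ sem (.neg ψ) ↔ s ∉ sem ψ := fun s => Iff.rfl
    have hsz : (Formula.neg ψ).size = ψ.size + 1 := rfl
    refine ⟨?_, ?_, ?_⟩
    · rintro (⟨h1, h2, h3⟩ | ⟨h1, h2, h3⟩) <;>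
        simp only [hmem, not_not] at h1 h2 h3 <;> rw [hsz]
      · exact le_trans ((ih n).1 (Or.inr ⟨h1, h2, h3⟩)) (Nat.le_succ _)
      · exact le_trans ((ih n).1 (Or.inl ⟨h1, h2, h3⟩)) (Nat.le_succ _)
    · rintro (⟨h1, h2, h3⟩ | ⟨h1, h2, h3⟩) <;>
        simp only [hmem, not_not] at h1 h2 h3 <;> rw [hsz]
      · exact le_trans ((ih n).2.1 (Or.inr ⟨h1, h2, h3⟩)) (Nat.le_succ _)
      · exact le_trans ((ih n).2.1 (Or.inl ⟨h1, h2, h3⟩)) (Nat.le_succ _)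
    · rintro (⟨h1, h2, h3⟩ | ⟨h1, h2, h3⟩) <;>
        simp only [hmem, not_not] at h1 h2 h3 <;> rw [hsz]
      · exact le_trans ((ih n).2.2 (Or.inr ⟨h1, h2, h3⟩)) (Nat.le_succ _)
      · exact le_trans ((ih n).2.2 (Or.inl ⟨h1, h2, h3⟩)) (Nat.le_succ _)
  | dia ψ ih =>
    intro n
    have hsz : (Formula.dia ψ).size = ψ.size + 1 := rfl
    match n with
    | 0 => refine ⟨?_, ?_, ?_⟩ <;> intro _ <;> simp
    | (m+1) =>
      refine ⟨?_, ?_, ?_⟩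
      · rintro (⟨h1, h2, h3⟩ | ⟨h1, h2, h3⟩) <;>
          rw [dia_x] at h1 <;> rw [dia_y] at h2 <;> rw [dia_z] at h3 <;> tauto
      · rintro (⟨h1, h2, h3⟩ | ⟨h1, h2, h3⟩) <;>
          rw [dia_x] at h1 <;> rw [dia_y] at h2 <;> rw [dia_z] at h3
        · tauto
        · push_neg at h2
          have hx : x m ∈ sem ψ := by tauto
          have hb : Nat.fib m ≤ ψ.size := (ih m).1 (Or.inl ⟨hx, h2.1, h2.2⟩)
          have he : (m+1) - 1 = m := rfl
          rw [he, hsz]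
          exact le_trans hb (Nat.le_succ _)
      · rintro (⟨h1, h2, h3⟩ | ⟨h1, h2, h3⟩) <;>
          rw [dia_x] at h1 <;> rw [dia_y] at h2 <;> rw [dia_z] at h3
        · tauto
        · push_neg at h3
          have hy : y m ∈ sem ψ := by tauto
          have hb : Nat.fib (m-1) ≤ ψ.size := (ih m).2.1 (Or.inl ⟨h3.1, hy, h3.2⟩)
          have he : (m+1) - 2 = m - 1 := by omega
          rw [he, hsz]
          exact le_trans hb (Nat.le_succ _)
  | and ψ χ ihψ ihχ =>
    intro n
    have hmem : ∀ s : St, s ∈ sem (.and ψ χ) ↔ (s ∈ sem ψ ∧ s ∈ sem χ) := fun s => Iff.rfl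
    have hsz : (Formula.and ψ χ).size = ψ.size + χ.size + 1 := rfl
    have htri := fib_tri n
    rw [hsz]
    refine ⟨?_, ?_, ?_⟩
    · rintro (⟨h1, h2, h3⟩ | ⟨h1, h2, h3⟩) <;>
        simp only [hmem] at h1 h2 h3
      · -- trace (1,0,0)
        obtain ⟨hxψ, hxχ⟩ := h1
        by_cases hyψ : y n ∈ sem ψ
        · have hyχ : y n ∉ sem χ := fun h => h2 ⟨hyψ, h⟩
          by_cases hzχ : z n ∈ sem χ
          · have hzψ : z n ∉ sem ψ := fun h => h3 ⟨h, hzχ⟩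
            have b1 : Nat.fib (n-1) ≤ χ.size := good_xy ihχ hxχ hyχ
            have b2 : Nat.fib (n-2) ≤ ψ.size := good_xz ihψ hxψ hzψ
            omega
          · have : Nat.fib n ≤ χ.size := (ihχ n).1 (Or.inl ⟨hxχ, hyχ, hzχ⟩)
            omega
        · by_cases hzψ : z n ∈ sem ψ
          · have hzχ : z n ∉ sem χ := fun h => h3 ⟨hzψ, h⟩
            have b1 : Nat.fib (n-1) ≤ ψ.size := (ihψ n).2.1 (Or.inr ⟨hxψ, hyψ, hzψ⟩)
            have b2 : Nat.fib (n-2) ≤ χ.size := good_xz ihχ hxχ hzχ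
            omega
          · have : Nat.fib n ≤ ψ.size := (ihψ n).1 (Or.inl ⟨hxψ, hyψ, hzψ⟩)
            omega
      · -- trace (0,1,1)
        obtain ⟨hyψ, hyχ⟩ := h2
        obtain ⟨hzψ, hzχ⟩ := h3
        by_cases hxψ : x n ∈ sem ψ
        · have hxχ : x n ∉ sem χ := fun h => h1 ⟨hxψ, h⟩
          have : Nat.fib n ≤ χ.size := (ihχ n).1 (Or.inr ⟨hxχ, hyχ, hzχ⟩)
          omega
        · have : Nat.fib n ≤ ψ.size := (ihψ n).1 (Or.inr ⟨hxψ, hyψ, hzψ⟩)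
          omega
    · rintro (⟨h1, h2, h3⟩ | ⟨h1, h2, h3⟩) <;>
        simp only [hmem] at h1 h2 h3
      · -- trace (0,1,0)
        obtain ⟨hyψ, hyχ⟩ := h2
        by_cases hxψ : x n ∈ sem ψ
        · have hxχ : x n ∉ sem χ := fun h => h1 ⟨hxψ, h⟩
          have : Nat.fib (n-1) ≤ χ.size := good_y ihχ hxχ hyχ
          omega
        · have : Nat.fib (n-1) ≤ ψ.size := good_y ihψ hxψ hyψ
          omega
      · -- trace (1,0,1)
        obtain ⟨hxψ, hxχ⟩ := h1
        obtain ⟨hzψ, hzχ⟩ := h3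
        by_cases hyψ : y n ∈ sem ψ
        · have hyχ : y n ∉ sem χ := fun h => h2 ⟨hyψ, h⟩
          have : Nat.fib (n-1) ≤ χ.size := (ihχ n).2.1 (Or.inr ⟨hxχ, hyχ, hzχ⟩)
          omega
        · have : Nat.fib (n-1) ≤ ψ.size := (ihψ n).2.1 (Or.inr ⟨hxψ, hyψ, hzψ⟩)
          omega
    · rintro (⟨h1, h2, h3⟩ | ⟨h1, h2, h3⟩) <;>
        simp only [hmem] at h1 h2 h3
      · -- trace (0,0,1)
        obtain ⟨hzψ, hzχ⟩ := h3
        by_cases hxψ : x n ∈ sem ψ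
        · have hxχ : x n ∉ sem χ := fun h => h1 ⟨hxψ, h⟩
          have : Nat.fib (n-2) ≤ χ.size := good_z ihχ hxχ hzχ
          omega
        · have : Nat.fib (n-2) ≤ ψ.size := good_z ihψ hxψ hzψ
          omega
      · -- trace (1,1,0)
        obtain ⟨hxψ, hxχ⟩ := h1
        obtain ⟨hyψ, hyχ⟩ := h2
        by_cases hzψ : z n ∈ sem ψ
        · have hzχ : z n ∉ sem χ := fun h => h3 ⟨hzψ, h⟩
          have : Nat.fib (n-2) ≤ χ.size := (ihχ n).2.2 (Or.inr ⟨hxχ, hyχ, hzχ⟩)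
          omega
        · have : Nat.fib (n-2) ≤ ψ.size := (ihψ n).2.2 (Or.inr ⟨hxψ, hyψ, hzψ⟩)
          omega

theorem stmt17 (n : ℕ) (φ : Formula)
    (h : sem φ ∩ {x n, y n, z n} = {x n}) : Nat.fib n ≤ φ.size := by
  have hx : x n ∈ sem φ ∩ {x n, y n, z n} := by
    rw [h]; exact rfl
  have hy : y n ∉ sem φ := by
    intro hy
    have : y n ∈ ({x n} : Set St) := by
      rw [← h]; exact ⟨hy, by simp⟩
    simp at this
  have hz : z n ∉ sem φ := by
    intro hz
    have : z n ∈ ({x n} : Set St) := by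
      rw [← h]; exact ⟨hz, by simp⟩
    simp at this
  exact (key φ n).1 (Or.inl ⟨hx.1, hy, hz⟩)
end

section
/- Let F be a Set-functor preserving finite intersections, let (C, c) be an F-coalgebra, and let S ⊆ B ⊆ C with S finite. Say there is a transition x → y if c(x) is not in the image of F applied to the inclusion C∖{y} ↪ C. If x has no transition into S, then F χ_S^B (c(x)) = F χ_∅^B (c(x)), where χ_S^B : C → 3 maps elements of S to 2, of B∖S to 1, and of C∖B to 0. -/
/-!
Call `u : F X` supported in `A ⊆ X` if it lies in the image of `F (A ↪ X)`. If `x` has no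
transition into `y`, then `c x` is supported in `C ∖ {y}`. Since `F` preserves finite
intersections and `S` is finite, `c x` is supported in `C ∖ S`; the two maps `C → 3` agree on
`C ∖ S`, so `F` sends `c x` to the same element under both.
-/

open CategoryTheory

open scoped Classical

namespace CategoryTheory.Functor

variable (F : Type ⥤ Type)

def IsSupportedIn {X : Type} (A : Set X) (u : F.obj X) : Prop :=
  u ∈ Set.range (F.map (TypeCat.ofHom (fun a : A => (a : X))))

def PreservesFiniteIntersections : Prop :=
  ∀ (X : Type) (A B : Set X) (u : F.obj X),
    F.IsSupportedIn A u → F.IsSupportedIn B u → F.IsSupportedIn (A ∩ B) u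

variable {F}

theorem isSupportedIn_univ {X : Type} (u : F.obj X) : F.IsSupportedIn Set.univ u :=
  ⟨F.map (TypeCat.ofHom (fun x : X => (⟨x, trivial⟩ : (Set.univ : Set X)))) u, by
    rw [← Functor.map_comp_apply]
    exact Functor.map_id_apply F _ u⟩

theorem IsSupportedIn.mono {X : Type} {A A' : Set X} {u : F.obj X} (hu : F.IsSupportedIn A u)
    (h : A ⊆ A') : F.IsSupportedIn A' u := by
  obtain ⟨w, rfl⟩ := hu
  exact ⟨F.map (TypeCat.ofHom (Set.inclusion h)) w, by rw [← Functor.map_comp_apply]; rfl⟩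

theorem IsSupportedIn.biInter (hF : F.PreservesFiniteIntersections) {ι : Type*} {X : Type}
    {T : Set ι} (hT : T.Finite) {A : ι → Set X} {u : F.obj X}
    (hu : ∀ i ∈ T, F.IsSupportedIn (A i) u) : F.IsSupportedIn (⋂ i ∈ T, A i) u := by
  induction T, hT using Set.Finite.induction_on with
  | empty => simpa using isSupportedIn_univ u
  | @insert a s _ _ ih =>
    rw [Set.biInter_insert]
    exact hF X _ _ u (hu a (Set.mem_insert a s))
      (ih fun i hi => hu i (Set.mem_insert_of_mem a hi))

theorem IsSupportedIn.map_eq {X Y : Type} {A : Set X} {u : F.obj X} (hu : F.IsSupportedIn A u)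
    {f g : X → Y} (hfg : Set.EqOn f g A) : F.map (TypeCat.ofHom f) u = F.map (TypeCat.ofHom g) u := by
  obtain ⟨w, rfl⟩ := hu
  simp only [← Functor.map_comp_apply]
  have hcomp : TypeCat.ofHom (fun a : A => (a : X)) ≫ TypeCat.ofHom f =
      TypeCat.ofHom (fun a : A => (a : X)) ≫ TypeCat.ofHom g := by
    ext ⟨z, hz⟩
    exact hfg hz
  rw [hcomp]

end CategoryTheory.Functor

theorem stmt19_general (F : Type ⥤ Type)
    -- F preserves finite intersections: the intersection of the images of
    -- F applied to the subset inclusions A ↪ X and B ↪ X is contained in the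
    -- image of F applied to the inclusion A ∩ B ↪ X.
    (hF : ∀ (X : Type) (A B : Set X),
      Set.range (F.map (TypeCat.ofHom (fun a : A => (a : X)))) ∩ Set.range (F.map (TypeCat.ofHom (fun b : B => (b : X)))) ⊆
        Set.range (F.map (TypeCat.ofHom (fun p : ↥(A ∩ B) => (p : X)))))
    (C : Type) (c : C → F.obj C) (S B : Set C) (hS : S.Finite) (x : C)
    -- x has no transition into S: for every y ∈ S, c x lies in the image of
    -- F applied to the inclusion C∖{y} ↪ C.
    (hx : ∀ y ∈ S, c x ∈ Set.range (F.map (TypeCat.ofHom (fun z : ↥({y}ᶜ : Set C) => (z : C))))) :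
    F.map (TypeCat.ofHom (fun z : C => if z ∈ S then (2 : Fin 3) else if z ∈ B then 1 else 0)) (c x) =
      F.map (TypeCat.ofHom (fun z : C => if z ∈ B then (1 : Fin 3) else 0)) (c x) := by
  have hsupp : F.IsSupportedIn Sᶜ (c x) :=
    (Functor.IsSupportedIn.biInter (fun X A B _ hA hB => hF X A B ⟨hA, hB⟩) hS hx).mono
      (by simp [← Set.compl_iUnion₂])
  exact hsupp.map_eq fun z (hz : z ∉ S) => by simp only [hz, if_false]

theorem stmt19 (F : Type ⥤ Type)
    -- F preserves finite intersections: the intersection of the images of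
    -- F applied to the subset inclusions A ↪ X and B ↪ X is contained in the
    -- image of F applied to the inclusion A ∩ B ↪ X.
    (hF : ∀ (X : Type) (A B : Set X),
      Set.range (F.map (TypeCat.ofHom (fun a : A => (a : X)))) ∩ Set.range (F.map (TypeCat.ofHom (fun b : B => (b : X)))) ⊆
        Set.range (F.map (TypeCat.ofHom (fun p : ↥(A ∩ B) => (p : X)))))
    (C : Type) (c : C → F.obj C) (S B : Set C) (hSB : S ⊆ B) (hS : S.Finite) (x : C)
    -- x has no transition into S: for every y ∈ S, c x lies in the image of
    -- F applied to the inclusion C∖{y} ↪ C.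
    (hx : ∀ y ∈ S, c x ∈ Set.range (F.map (TypeCat.ofHom (fun z : ↥({y}ᶜ : Set C) => (z : C))))) :
    F.map (TypeCat.ofHom (fun z : C => if z ∈ S then (2 : Fin 3) else if z ∈ B then 1 else 0)) (c x) =
      F.map (TypeCat.ofHom (fun z : C => if z ∈ B then (1 : Fin 3) else 0)) (c x) :=
  stmt19_general F hF C c S B hS x hx
end
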